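/- Let δ > 0, let X be the line segment from a to b in R, and let Q : [0,1] → R be a curve with Q(0) = a, Q(1) = b, Q(t) lying in the closed interval with endpoints a and b for all t, and d_F(Q,X) ≤ δ. Then for every curve P : [0,1] → R with d_F(P,X) ≤ δ it holds that d_F(P,Q) ≤ δ. -/

import Mathlib

/-- Continuous Fréchet distance between curves on the unit interval. -/
noncomputable def frechetDist {E : Type*} [PseudoMetricSpace E] (P Q : unitInterval → E) : ℝ :=
  sInf {r : ℝ | ∃ f g : unitInterval → unitInterval,
    Continuous f ∧ Monotone f ∧ Function.Surjective f ∧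
    Continuous g ∧ Monotone g ∧ Function.Surjective g ∧
    ∀ t, dist (P (f t)) (Q (g t)) ≤ r}

/-- The directed line segment from `a` to `b`, parametrized linearly. -/
noncomputable def segCurve {E : Type*} [AddCommGroup E] [Module ℝ E] (a b : E) :
    unitInterval → E :=
  fun t => (1 - (t : ℝ)) • a + (t : ℝ) • b

/-- The polygonal curve with `n+1` vertices `p 0, …, p n`, parametrized uniformly. -/
noncomputable def polyCurve {E : Type*} [AddCommGroup E] [Module ℝ E]
    (n : ℕ) (p : Fin (n + 1) → E) (t : unitInterval) : E :=
  let x : ℝ := (t : ℝ) * n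
  let i : ℕ := min (Nat.floor x) (n - 1)
  (1 - (x - (i : ℝ))) • p ⟨min i n, Nat.lt_succ_of_le (min_le_right i n)⟩ +
    (x - (i : ℝ)) • p ⟨min (i + 1) n, Nat.lt_succ_of_le (min_le_right (i + 1) n)⟩

/-- The subcurve `Q[a,b]`, linearly reparametrized over the unit interval. -/
noncomputable def subcurve {E : Type*} (Q : unitInterval → E) (a b : unitInterval) :
    unitInterval → E :=
  fun s => Q ⟨(1 - (s : ℝ)) * (a : ℝ) + (s : ℝ) * (b : ℝ), Set.mem_Icc.mpr ⟨by
      have hs0 := unitInterval.nonneg s; have hs1 := unitInterval.le_one s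
      have ha0 := unitInterval.nonneg a; have hb0 := unitInterval.nonneg b
      have h1 : (0:ℝ) ≤ (1 - (s:ℝ)) * (a:ℝ) := mul_nonneg (by linarith) ha0
      have h2 : (0:ℝ) ≤ (s:ℝ) * (b:ℝ) := mul_nonneg hs0 hb0
      linarith, by
      have hs0 := unitInterval.nonneg s; have hs1 := unitInterval.le_one s
      have ha1 := unitInterval.le_one a; have hb1 := unitInterval.le_one b
      have h1 : (1 - (s:ℝ)) * (a:ℝ) ≤ (1 - (s:ℝ)) * 1 :=
        mul_le_mul_of_nonneg_left ha1 (by linarith)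
      have h2 : (s:ℝ) * (b:ℝ) ≤ (s:ℝ) * 1 := mul_le_mul_of_nonneg_left hb1 hs0
      linarith⟩⟩

/-- The parameter (in the uniform parametrization) of the `i`-th vertex of a
polygonal curve with `n` edges. -/
noncomputable def vparam (n : ℕ) (i : Fin (n + 1)) : unitInterval :=
  ⟨((i : ℕ) : ℝ) / (n : ℝ), Set.mem_Icc.mpr ⟨by positivity, by
    have h1 : ((i : ℕ) : ℝ) ≤ (n : ℝ) := by exact_mod_cast Nat.lt_succ_iff.mp i.isLt
    rcases Nat.eq_zero_or_pos n with h | h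
    · subst h; simp
    · rw [div_le_one (by exact_mod_cast h)]; exact h1⟩⟩

/-- `P` is `c`-monotone increasing. -/
def ApproxInc (c : ℝ) (P : unitInterval → ℝ) : Prop :=
  ∀ s t : unitInterval, s ≤ t → P s - c ≤ P t

/-- `P` is `c`-monotone decreasing. -/
def ApproxDec (c : ℝ) (P : unitInterval → ℝ) : Prop :=
  ∀ s t : unitInterval, s ≤ t → P t ≤ P s + c

/-- `P` is `c`-monotone. -/
def ApproxMono (c : ℝ) (P : unitInterval → ℝ) : Prop :=
  ApproxInc c P ∨ ApproxDec c P

/-- Concatenation of two curves (first on `[0,1/2]`, second on `[1/2,1]`). -/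
noncomputable def concatC {E : Type*} (P Q : unitInterval → E) : unitInterval → E :=
  fun t =>
    if h : (t : ℝ) ≤ 1 / 2 then
      P ⟨2 * (t : ℝ), Set.mem_Icc.mpr ⟨by have := unitInterval.nonneg t; linarith,
        by linarith⟩⟩
    else
      Q ⟨2 * (t : ℝ) - 1, Set.mem_Icc.mpr ⟨by push_neg at h; linarith,
        by have := unitInterval.le_one t; linarith⟩⟩

/-- The data of a `δ`-straightening of the curve `Q`: parameters
`0 = t 0 < … < t (Fin.last ℓ) = 1` such that each shortcut segment is within
Fréchet distance `δ` of the corresponding subcurve (locality), and each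
corresponding subcurve stays in the closed interval spanned by the shortcut's
endpoints (edge-range-preserving). -/
def StraighteningData (δ : ℝ) (Q : unitInterval → ℝ) (ℓ : ℕ)
    (t : Fin (ℓ + 1) → unitInterval) : Prop :=
  StrictMono t ∧ t 0 = 0 ∧ t (Fin.last ℓ) = 1 ∧
    ∀ i : Fin ℓ,
      frechetDist (segCurve (Q (t i.castSucc)) (Q (t i.succ)))
          (subcurve Q (t i.castSucc) (t i.succ)) ≤ δ ∧
      ∀ s : unitInterval, t i.castSucc ≤ s → s ≤ t i.succ →
        Q s ∈ Set.uIcc (Q (t i.castSucc)) (Q (t i.succ))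

/-- `Q'` is a `δ`-straightening of `Q`. -/
def IsStraightening (δ : ℝ) (Q Q' : unitInterval → ℝ) : Prop :=
  ∃ (ℓ : ℕ) (t : Fin (ℓ + 1) → unitInterval),
    StraighteningData δ Q ℓ t ∧ Q' = polyCurve ℓ (fun i => Q (t i))

/-- The data of a `δ`-signature of the curve `Q`: parameters
`0 = t 0 < … < t (Fin.last ℓ) = 1` with the locality property, non-degenerate
vertex-range-preserving interior vertices, and the `δ`-edge-length property. -/
def SignatureData (δ : ℝ) (Q : unitInterval → ℝ) (ℓ : ℕ)
    (t : Fin (ℓ + 1) → unitInterval) : Prop :=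
  StrictMono t ∧ t 0 = 0 ∧ t (Fin.last ℓ) = 1 ∧
    (∀ i : Fin ℓ,
      frechetDist (segCurve (Q (t i.castSucc)) (Q (t i.succ)))
          (subcurve Q (t i.castSucc) (t i.succ)) ≤ δ) ∧
    (∀ i : ℕ, ∀ _h1 : 0 < i, ∀ _h2 : i < ℓ,
      (Q (t ⟨i - 1, by omega⟩) < Q (t ⟨i, by omega⟩) ∧
        Q (t ⟨i + 1, by omega⟩) < Q (t ⟨i, by omega⟩) ∧
        ∀ s : unitInterval, t ⟨i - 1, by omega⟩ ≤ s → s ≤ t ⟨i + 1, by omega⟩ →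
          Q s ≤ Q (t ⟨i, by omega⟩)) ∨
      (Q (t ⟨i, by omega⟩) < Q (t ⟨i - 1, by omega⟩) ∧
        Q (t ⟨i, by omega⟩) < Q (t ⟨i + 1, by omega⟩) ∧
        ∀ s : unitInterval, t ⟨i - 1, by omega⟩ ≤ s → s ≤ t ⟨i + 1, by omega⟩ →
          Q (t ⟨i, by omega⟩) ≤ Q s)) ∧
    (∀ _h : 1 ≤ ℓ,
      δ < |Q (t ⟨1, by omega⟩) - Q (t 0)| ∧
      δ < |Q (t (Fin.last ℓ)) - Q (t ⟨ℓ - 1, by omega⟩)|) ∧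
    (∀ j : ℕ, ∀ _hj1 : 1 ≤ j, ∀ _hj2 : j + 2 ≤ ℓ,
      2 * δ < |Q (t ⟨j + 1, by omega⟩) - Q (t ⟨j, by omega⟩)|)

/-- `Q'` is a `δ`-signature of `Q`. -/
def IsSignature (δ : ℝ) (Q Q' : unitInterval → ℝ) : Prop :=
  ∃ (ℓ : ℕ) (t : Fin (ℓ + 1) → unitInterval),
    SignatureData δ Q ℓ t ∧ Q' = polyCurve ℓ (fun i => Q (t i))

/-- Vertex `j` of the polygonal curve on `q` `δ`-visits vertex `a` of the
polygonal curve on `p` under the monotone traversal `(f, g)`: they are within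
distance `δ`, and the traversal matches one of them to the other vertex or to the
interior of an edge incident to it. -/
def Visits (δ : ℝ) (m k : ℕ) (p : Fin (m + 1) → ℝ) (q : Fin (k + 1) → ℝ)
    (f g : unitInterval → unitInterval) (j : Fin (k + 1)) (a : Fin (m + 1)) : Prop :=
  |q j - p a| ≤ δ ∧
    ((∃ t : unitInterval, g t = vparam k j ∧ |(f t : ℝ) * (m : ℝ) - ((a : ℕ) : ℝ)| < 1) ∨
     (∃ t : unitInterval, f t = vparam m a ∧ |(g t : ℝ) * (k : ℝ) - ((j : ℕ) : ℝ)| < 1))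

/-! Assume `a ≤ b` (otherwise negate everything). A curve `R` with `d_F(R, X) ≤ δ` starts below
`a + δ`, ends above `b - δ`, stays in `[a - δ, b + δ]` and is `2δ`-monotone increasing. Let `M` be
the running maximum of `Q`, so that `M s - 2δ ≤ Q s ≤ M s`. Match the parameter `s` of `Q` with the
last time `φ s` at which `P` is at most `M s - δ`: there `P` equals `M s - δ`, within `δ` of `Q s`.
Where `φ` jumps, `Q s = M s` is a new maximum, and `P` stays within `δ` of it while it is traversed
across the jump. Filling in the jumps of `φ` gives a monotone matching. -/

open Set Function unitInterval

theorem Monotone.map_bot_of_surjective {α β : Type*} [Preorder α] [OrderBot α] [PartialOrder β]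
    [OrderBot β] {f : α → β} (hf : Monotone f) (hs : Surjective f) : f ⊥ = ⊥ := by
  obtain ⟨x, hx⟩ := hs ⊥
  exact le_bot_iff.1 (hx ▸ hf bot_le)

theorem Monotone.map_top_of_surjective {α β : Type*} [Preorder α] [OrderTop α] [PartialOrder β]
    [OrderTop β] {f : α → β} (hf : Monotone f) (hs : Surjective f) : f ⊤ = ⊤ :=
  hf.dual.map_bot_of_surjective hs

theorem unitInterval.surjective_of_continuous {f : I → I} (hf : Continuous f) (h0 : f 0 = 0)
    (h1 : f 1 = 1) : Surjective f := fun y =>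
  intermediate_value_univ 0 1 hf ⟨by rw [h0]; exact nonneg', by rw [h1]; exact le_one'⟩

section Frechet

variable {E : Type*} [PseudoMetricSpace E] {P Q : I → E}

theorem frechetDist_le_of_forall_dist_le {δ : ℝ} {f g : I → I} (hf : Continuous f)
    (hfm : Monotone f) (hfs : Surjective f) (hg : Continuous g) (hgm : Monotone g)
    (hgs : Surjective g) (h : ∀ t, dist (P (f t)) (Q (g t)) ≤ δ) : frechetDist P Q ≤ δ :=
  csInf_le ⟨0, fun _ ⟨_, _, _, _, _, _, _, _, hr⟩ => dist_nonneg.trans (hr 0)⟩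
    ⟨f, g, hf, hfm, hfs, hg, hgm, hgs, h⟩

theorem exists_forall_dist_le_of_frechetDist_lt (hP : Continuous P) (hQ : Continuous Q) {r : ℝ}
    (h : frechetDist P Q < r) :
    ∃ f g : I → I, Continuous f ∧ Monotone f ∧ Surjective f ∧
      Continuous g ∧ Monotone g ∧ Surjective g ∧ ∀ t, dist (P (f t)) (Q (g t)) ≤ r := by
  unfold frechetDist at h
  obtain ⟨C, hC⟩ := (isCompact_range (hP.dist hQ)).bddAbove
  obtain ⟨r', ⟨f, g, hf, hfm, hfs, hg, hgm, hgs, hr'⟩, hlt⟩ := exists_lt_of_csInf_lt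
    (by exact ⟨C, id, id, continuous_id, monotone_id, surjective_id, continuous_id, monotone_id,
      surjective_id, fun t => hC ⟨t, rfl⟩⟩) h
  exact ⟨f, g, hf, hfm, hfs, hg, hgm, hgs, fun t => (hr' t).trans hlt.le⟩

theorem frechetDist_comp_isometry {F : Type*} [PseudoMetricSpace F] {e : E → F} (he : Isometry e)
    (P Q : I → E) : frechetDist (e ∘ P) (e ∘ Q) = frechetDist P Q := by
  simp only [frechetDist, comp_apply, he.dist_eq]

section Staircase

variable {φ : I → I}

/-- The `s`-coordinate of the point with `s + p = u` on the graph of `φ` with its jumps filled in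
vertically. -/
noncomputable def staircaseParam (φ : I → I) (u : ℝ) : ℝ := ⨅ s' : I, max (s' : ℝ) (u - φ s')

theorem bddBelow_staircaseParam (u : ℝ) :
    BddBelow (range fun s' : I => max (s' : ℝ) (u - φ s')) :=
  ⟨0, by rintro _ ⟨s', rfl⟩; exact le_max_of_le_left s'.2.1⟩

theorem staircaseParam_le (u : ℝ) (s' : I) : staircaseParam φ u ≤ max (s' : ℝ) (u - φ s') :=
  ciInf_le (bddBelow_staircaseParam u) s'

theorem staircaseParam_nonneg (u : ℝ) : 0 ≤ staircaseParam φ u :=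
  le_ciInf fun s' => le_max_of_le_left s'.2.1

theorem sub_one_le_staircaseParam (u : ℝ) : u - 1 ≤ staircaseParam φ u :=
  le_ciInf fun s' => le_max_of_le_right (by linarith [(φ s').2.2])

theorem staircaseParam_le_self {u : ℝ} (hu : 0 ≤ u) : staircaseParam φ u ≤ u :=
  (staircaseParam_le u 0).trans (max_le hu (by linarith [(φ 0).2.1]))

theorem staircaseParam_le_one (hφ1 : φ 1 = 1) {u : ℝ} (hu : u ≤ 2) : staircaseParam φ u ≤ 1 :=
  (staircaseParam_le u 1).trans (max_le le_rfl (by rw [hφ1]; push_cast; linarith))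

theorem monotone_staircaseParam : Monotone (staircaseParam φ) := fun u v huv =>
  le_ciInf fun s' => (staircaseParam_le u s').trans (max_le_max le_rfl (by linarith))

theorem staircaseParam_le_add {u v : ℝ} (huv : u ≤ v) :
    staircaseParam φ v ≤ staircaseParam φ u + (v - u) := by
  rw [← sub_le_iff_le_add]
  refine le_ciInf fun s' => sub_le_iff_le_add.2 ((staircaseParam_le v s').trans ?_)
  exact max_le (by linarith [le_max_left (s' : ℝ) (u - φ s')])
    (by linarith [le_max_right (s' : ℝ) (u - φ s')])

theorem continuous_staircaseParam : Continuous (staircaseParam φ) :=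
  (LipschitzWith.of_le_add fun u v => by
    rcases le_total u v with huv | hvu
    · exact (monotone_staircaseParam huv).trans (le_add_of_nonneg_right dist_nonneg)
    · rw [Real.dist_eq, abs_of_nonneg (sub_nonneg.2 hvu)]
      exact staircaseParam_le_add hvu).continuous

theorem frechetDist_le_of_staircase {δ : ℝ} (hφ1 : φ 1 = 1)
    (h : ∀ s p : I, (∀ s' < s, φ s' ≤ p) →
      (∀ ε > 0, ∃ s' : I, (s' : ℝ) < s + ε ∧ (p : ℝ) < φ s' + ε) → dist (P p) (Q s) ≤ δ) :
    frechetDist P Q ≤ δ := by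
  set κ := staircaseParam φ
  let g : I → I := fun t => ⟨κ (2 * t), staircaseParam_nonneg _,
    staircaseParam_le_one hφ1 (by linarith [t.2.2])⟩
  let f : I → I := fun t => ⟨2 * t - κ (2 * t),
    by linarith [staircaseParam_le_self (φ := φ) (by linarith [t.2.1] : 0 ≤ 2 * (t : ℝ))],
    by linarith [sub_one_le_staircaseParam (φ := φ) (2 * t)]⟩
  have hκ : Continuous κ := continuous_staircaseParam
  have hg : Continuous g := by fun_prop
  have hf : Continuous f := by fun_prop
  have hgm : Monotone g := fun t t' htt' => monotone_staircaseParam (by simpa using htt')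
  have hfm : Monotone f := fun t t' htt' => by
    change 2 * (t : ℝ) - κ (2 * t) ≤ 2 * t' - κ (2 * t')
    linarith [staircaseParam_le_add (φ := φ) (by simpa using htt' : 2 * (t : ℝ) ≤ 2 * t')]
  have hκ0 : κ 0 = 0 := le_antisymm (staircaseParam_le_self le_rfl) (staircaseParam_nonneg _)
  have hκ2 : κ 2 = 1 :=
    le_antisymm (staircaseParam_le_one hφ1 le_rfl)
      (by linarith [sub_one_le_staircaseParam (φ := φ) 2])
  have hg0 : g 0 = 0 := Subtype.ext (by simp [g, hκ0])
  have hg1 : g 1 = 1 := Subtype.ext (by simp [g, hκ2])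
  have hf0 : f 0 = 0 := Subtype.ext (by simp [f, hκ0])
  have hf1 : f 1 = 1 := Subtype.ext (by simp [f, hκ2]; norm_num)
  refine frechetDist_le_of_forall_dist_le hf hfm (surjective_of_continuous hf hf0 hf1) hg hgm
    (surjective_of_continuous hg hg0 hg1) fun t => h _ _ (fun s' hs' => ?_) fun ε hε => ?_
  · change (φ s' : ℝ) ≤ 2 * t - κ (2 * t)
    rcases le_max_iff.1 (staircaseParam_le (φ := φ) (2 * t) s') with h' | h'
    · exact absurd hs' (not_lt.2 h')
    · linarith
  · obtain ⟨s', hs'⟩ := exists_lt_of_ciInf_lt (lt_add_of_pos_right (κ (2 * t)) hε)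
    exact ⟨s', (le_max_left _ _).trans_lt hs', by
      change 2 * (t : ℝ) - κ (2 * t) < φ s' + ε; linarith [(le_max_right _ _).trans_lt hs']⟩

end Staircase

end Frechet

theorem continuous_segCurve {E : Type*} [AddCommGroup E] [Module ℝ E] [TopologicalSpace E]
    [IsTopologicalAddGroup E] [ContinuousSMul ℝ E] (a b : E) : Continuous (segCurve a b) := by
  unfold segCurve; fun_prop

theorem segCurve_neg {E : Type*} [AddCommGroup E] [Module ℝ E] (a b : E) :
    segCurve (-a) (-b) = Neg.neg ∘ segCurve a b := by
  ext t; simp [segCurve, add_comm]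

theorem segCurve_apply_real (a b : ℝ) (t : I) : segCurve a b t = a + t * (b - a) := by
  simp only [segCurve, smul_eq_mul]; ring

theorem monotone_segCurve {a b : ℝ} (hab : a ≤ b) : Monotone (segCurve a b) := fun s t hst => by
  simp only [segCurve_apply_real]
  gcongr

structure FollowsSegment (δ a b : ℝ) (R : I → ℝ) : Prop where
  apply_zero_le : R 0 ≤ a + δ
  le_apply_one : b - δ ≤ R 1
  mem_Icc : ∀ p, R p ∈ Icc (a - δ) (b + δ)
  approxInc : ApproxInc (2 * δ) R

theorem FollowsSegment.of_forall_dist_le {R : I → ℝ} {a b r : ℝ} (hab : a ≤ b) {f g : I → I}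
    (hfm : Monotone f) (hfs : Surjective f) (hgm : Monotone g) (hgs : Surjective g)
    (h : ∀ t, dist (R (f t)) (segCurve a b (g t)) ≤ r) : FollowsSegment r a b R := by
  have hX : ∀ t, segCurve a b t ∈ Icc a b := fun t =>
    ⟨by simpa [segCurve_apply_real] using monotone_segCurve hab (nonneg' (t := t)),
      by simpa [segCurve_apply_real] using monotone_segCurve hab (le_one' (t := t))⟩
  have h' : ∀ t, R (f t) ∈ Icc (segCurve a b (g t) - r) (segCurve a b (g t) + r) := fun t =>
    ⟨by linarith [neg_abs_le (R (f t) - segCurve a b (g t)), Real.dist_eq _ _ ▸ h t],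
      by linarith [le_abs_self (R (f t) - segCurve a b (g t)), Real.dist_eq _ _ ▸ h t]⟩
  have hf0 : f 0 = 0 := hfm.map_bot_of_surjective hfs
  have hf1 : f 1 = 1 := hfm.map_top_of_surjective hfs
  have hg0 : g 0 = 0 := hgm.map_bot_of_surjective hgs
  have hg1 : g 1 = 1 := hgm.map_top_of_surjective hgs
  refine ⟨?_, ?_, fun p => ?_, fun p p' hpp' => ?_⟩
  · simpa [hf0, hg0, segCurve_apply_real] using (h' 0).2
  · simpa [hf1, hg1, segCurve_apply_real] using (h' 1).1
  · obtain ⟨t, rfl⟩ := hfs p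
    exact ⟨by linarith [(h' t).1, (hX (g t)).1], by linarith [(h' t).2, (hX (g t)).2]⟩
  · obtain ⟨t, rfl⟩ := hfs p
    obtain ⟨t', rfl⟩ := hfs p'
    rcases le_total t t' with htt' | ht't
    · linarith [(h' t).2, (h' t').1, monotone_segCurve hab (hgm htt')]
    · have hr : 0 ≤ r := dist_nonneg.trans (h t)
      rw [le_antisymm hpp' (hfm ht't)]
      linarith

theorem FollowsSegment.of_frechetDist_le {R : I → ℝ} {a b δ : ℝ} (hab : a ≤ b)
    (hR : Continuous R) (h : frechetDist R (segCurve a b) ≤ δ) : FollowsSegment δ a b R := by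
  have approx : ∀ ε > 0, FollowsSegment (δ + ε) a b R := fun ε hε => by
    obtain ⟨f, g, -, hfm, hfs, -, hgm, hgs, hfg⟩ := exists_forall_dist_le_of_frechetDist_lt hR
      (continuous_segCurve a b) (h.trans_lt (lt_add_of_pos_right δ hε))
    exact .of_forall_dist_le hab hfm hfs hgm hgs hfg
  refine ⟨le_of_forall_pos_le_add fun ε hε => ?_, le_of_forall_pos_le_add fun ε hε => ?_,
    fun p => ⟨le_of_forall_pos_le_add fun ε hε => ?_, le_of_forall_pos_le_add fun ε hε => ?_⟩,
    fun p p' hpp' => le_of_forall_pos_le_add fun ε hε => ?_⟩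
  · linarith [(approx ε hε).apply_zero_le]
  · linarith [(approx ε hε).le_apply_one]
  · linarith [((approx ε hε).mem_Icc p).1]
  · linarith [((approx ε hε).mem_Icc p).2]
  · linarith [(approx (ε / 2) (half_pos hε)).approxInc p p' hpp']

section RunningMax

variable {Q : I → ℝ} {s : I}

/-- The maximum of `Q` on `[0, s]`, written with `min` so that `IsCompact.continuous_sSup`
applies. -/
noncomputable def runningMax (Q : I → ℝ) (s : I) : ℝ :=
  sSup ((fun r => Q (min r s)) '' univ)

theorem exists_le_apply_eq_runningMax (hQ : Continuous Q) (s : I) :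
    ∃ r ≤ s, Q r = runningMax Q s := by
  obtain ⟨r, -, hr⟩ :=
    (isCompact_univ.image (hQ.comp (continuous_id.min continuous_const))).sSup_mem
      (univ_nonempty.image _)
  exact ⟨min r s, min_le_right r s, hr⟩

theorem apply_le_runningMax (hQ : Continuous Q) {r : I} (hrs : r ≤ s) : Q r ≤ runningMax Q s :=
  le_csSup (isCompact_univ.image (hQ.comp (continuous_id.min continuous_const))).bddAbove
    ⟨r, trivial, by simp only [min_eq_left hrs]⟩

theorem runningMax_le {b : ℝ} (hb : ∀ r, Q r ≤ b) (s : I) : runningMax Q s ≤ b :=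
  csSup_le (univ_nonempty.image _) (by rintro _ ⟨r, -, rfl⟩; exact hb _)

theorem runningMax_zero (hQ : Continuous Q) : runningMax Q 0 = Q 0 := by
  obtain ⟨r, hr, hQr⟩ := exists_le_apply_eq_runningMax hQ 0
  rw [← hQr, le_antisymm hr nonneg']

theorem monotone_runningMax (hQ : Continuous Q) : Monotone (runningMax Q) := fun s s' hss' =>
  csSup_le (univ_nonempty.image _)
    (by rintro _ ⟨r, -, rfl⟩; exact apply_le_runningMax hQ ((min_le_right r s).trans hss'))

theorem continuous_runningMax (hQ : Continuous Q) : Continuous (runningMax Q) :=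
  isCompact_univ.continuous_sSup (f := fun s r => Q (min r s))
    (hQ.comp (continuous_snd.min continuous_fst))

end RunningMax

section LastTime

variable {P : I → ℝ} {c : ℝ} {p : I}

/-- The last time `P` is at most `c`; it is `0` (as `sSup ∅`) when `P` stays above `c`. -/
noncomputable def lastTimeLE (P : I → ℝ) (c : ℝ) : I := sSup {p | P p ≤ c}

theorem le_lastTimeLE (h : P p ≤ c) : p ≤ lastTimeLE P c := le_sSup h

theorem lt_apply_of_lastTimeLE_lt (h : lastTimeLE P c < p) : c < P p :=
  lt_of_not_ge fun hp => h.not_ge (le_lastTimeLE hp)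

theorem monotone_lastTimeLE : Monotone (lastTimeLE P) := fun _ _ hcc' =>
  sSup_le_sSup fun _ hp => le_trans hp hcc'

theorem apply_lastTimeLE_le (hP : Continuous P) (h : ∃ p, P p ≤ c) : P (lastTimeLE P c) ≤ c :=
  IsClosed.sSup_mem h (isClosed_le hP continuous_const)

theorem lastTimeLE_eq_zero (h : ¬∃ p, P p ≤ c) : lastTimeLE P c = 0 := by
  rw [lastTimeLE, show {p | P p ≤ c} = ∅ from eq_empty_of_forall_notMem fun p hp => h ⟨p, hp⟩,
    sSup_empty]
  rfl

theorem apply_lastTimeLE_le_max (hP : Continuous P) (c : ℝ) :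
    P (lastTimeLE P c) ≤ max c (P 0) := by
  by_cases h : ∃ p, P p ≤ c
  · exact (apply_lastTimeLE_le hP h).trans (le_max_left _ _)
  · rw [lastTimeLE_eq_zero h]; exact le_max_right _ _

theorem apply_le_of_le_lastTimeLE (hP : Continuous P) {w : ℝ} (hPw : ApproxInc w P)
    (h : p ≤ lastTimeLE P c) : P p ≤ max (c + w) (P 0) := by
  by_cases hc : ∃ p, P p ≤ c
  · linarith [hPw _ _ h, apply_lastTimeLE_le hP hc, le_max_left (c + w) (P 0)]
  · rw [lastTimeLE_eq_zero hc] at h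
    rw [le_antisymm h nonneg']
    exact le_max_right _ _

theorem le_apply_of_lastTimeLE_le (hP : Continuous P) (h : lastTimeLE P c ≤ p) (hp : p < 1) :
    c ≤ P p := by
  have hcl : closure (Ioi (lastTimeLE P c)) ⊆ {q | c ≤ P q} :=
    (isClosed_le continuous_const hP).closure_subset_iff.2 fun _ hq =>
      (lt_apply_of_lastTimeLE_lt hq).le
  rw [closure_Ioi' (α := I) ⟨1, h.trans_lt hp⟩] at hcl
  exact hcl h

theorem exists_lastTimeLE_add_lt (hP : Continuous P) {q : I} (h : lastTimeLE P c < q) :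
    ∃ ρ > 0, lastTimeLE P (c + ρ) < q := by
  obtain ⟨p₀, hp₀, hmin⟩ := isClosed_Ici.isCompact.exists_isMinOn ⟨q, le_rfl⟩ hP.continuousOn
  have hc : c < P p₀ := lt_apply_of_lastTimeLE_lt (h.trans_le hp₀)
  refine ⟨(P p₀ - c) / 2, by linarith, lt_of_not_ge fun hq => ?_⟩
  by_cases hne : ∃ p, P p ≤ c + (P p₀ - c) / 2
  · linarith [apply_lastTimeLE_le hP hne, isMinOn_iff.1 hmin _ hq]
  · rw [lastTimeLE_eq_zero hne] at hq
    exact (h.trans_le hq).not_ge nonneg'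

end LastTime

section Proxy

variable {P Q : I → ℝ} {a b δ : ℝ} {s p : I}

theorem runningMax_sub_le_of_forall_lastTimeLE_le (hP : Continuous P) (hQ : Continuous Q)
    (hPa : FollowsSegment δ a b P) (hQ0 : Q 0 = a) (hQb : ∀ r, Q r ≤ b)
    (h : ∀ s' < s, lastTimeLE P (runningMax Q s' - δ) ≤ p) : runningMax Q s - δ ≤ P p := by
  by_contra! hlt
  rcases eq_or_ne s 0 with rfl | hs0
  · rw [runningMax_zero hQ, hQ0] at hlt
    linarith [(hPa.mem_Icc p).1]
  · have hU : {s' | P p + δ < runningMax Q s'} ∈ nhds s :=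
      (isOpen_lt continuous_const (continuous_runningMax hQ)).mem_nhds
        (show P p + δ < runningMax Q s by linarith)
    obtain ⟨l, hl, hsub⟩ := exists_Ioc_subset_of_mem_nhds hU ⟨0, bot_lt_iff_ne_bot.2 hs0⟩
    obtain ⟨s', hls', hs's⟩ := exists_between hl
    have hPs' : P p + δ < runningMax Q s' := hsub ⟨hls', hs's.le⟩
    rcases lt_or_eq_of_le (le_one' (t := p)) with hp1 | rfl
    · linarith [le_apply_of_lastTimeLE_le hP (h s' hs's) hp1]
    · linarith [hPa.le_apply_one, runningMax_le hQb s']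

theorem le_lastTimeLE_runningMax (hP : Continuous P) (hQ : Continuous Q)
    (h : ∀ ε > 0, ∃ s' : I, (s' : ℝ) < s + ε ∧
      (p : ℝ) < lastTimeLE P (runningMax Q s' - δ) + ε) :
    p ≤ lastTimeLE P (runningMax Q s - δ) := by
  by_contra! hlt
  obtain ⟨ρ, hρ, hρlt⟩ := exists_lastTimeLE_add_lt hP hlt
  set q := lastTimeLE P (runningMax Q s - δ + ρ)
  obtain ⟨θ, hθ, hM⟩ := Metric.continuousAt_iff.1 (continuous_runningMax hQ).continuousAt ρ hρ
  have hgap : (0 : ℝ) < p - q := sub_pos.2 hρlt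
  obtain ⟨s', hs', hp⟩ := h (min θ (p - q)) (lt_min hθ hgap)
  have hMs' : runningMax Q s' - δ ≤ runningMax Q s - δ + ρ := by
    rcases le_total s' s with h' | h'
    · linarith [monotone_runningMax hQ h']
    · have hd : dist s' s < θ := by
        rw [Subtype.dist_eq, Real.dist_eq,
          abs_of_nonneg (sub_nonneg.2 (Subtype.coe_le_coe.2 h'))]
        linarith [min_le_left θ (p - q)]
      linarith [(abs_lt.1 (Real.dist_eq _ _ ▸ hM hd)).2]
  have hq : (lastTimeLE P (runningMax Q s' - δ) : ℝ) ≤ q := monotone_lastTimeLE hMs'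
  linarith [min_le_right θ (p - q)]

theorem frechetDist_le_of_followsSegment (hP : Continuous P) (hQ : Continuous Q)
    (hPa : FollowsSegment δ a b P) (hQ0 : Q 0 = a) (hQ1 : Q 1 = b) (hQr : ∀ s, Q s ∈ Icc a b)
    (hQ2 : ApproxInc (2 * δ) Q) : frechetDist P Q ≤ δ := by
  set T : I → I := fun s => lastTimeLE P (runningMax Q s - δ)
  -- Forcing `φ 1 = 1` matches the tail of `P` after `T 1` with `Q 1 = b`.
  refine frechetDist_le_of_staircase (φ := fun s => if s = 1 then 1 else T s) (if_pos rfl)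
    fun s p h1 h2 => ?_
  have hT : ∀ s' < s, T s' ≤ p := fun s' hs' => by
    simpa [(hs'.trans_le le_one').ne] using h1 s' hs'
  have hlow := runningMax_sub_le_of_forall_lastTimeLE_le hP hQ hPa hQ0 (fun r => (hQr r).2) hT
  have hQM := apply_le_runningMax hQ (le_refl s)
  rw [Real.dist_eq, abs_sub_le_iff]
  rcases lt_or_eq_of_le (le_one' (t := s)) with hs1 | rfl
  · have hp : p ≤ T s := le_lastTimeLE_runningMax hP hQ fun ε hε => by
      obtain ⟨s', hs', hp'⟩ := h2 (min ε (1 - (s : ℝ))) (lt_min hε (sub_pos.2 hs1))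
      have hs'1 : s' ≠ 1 := by
        rintro rfl
        push_cast at hs'
        linarith [min_le_right ε (1 - (s : ℝ))]
      rw [if_neg hs'1] at hp'
      have := min_le_left ε (1 - (s : ℝ))
      exact ⟨s', by linarith, by linarith⟩
    obtain ⟨r, hrs, hQr'⟩ := exists_le_apply_eq_runningMax hQ s
    refine ⟨sub_le_iff_le_add'.2 ?_, by linarith⟩
    rcases lt_or_eq_of_le hrs with hrs | rfl
    -- `Q s` lies below a maximum attained earlier, so `φ` is flat there and `p = T s`.
    · have hMr : runningMax Q r = runningMax Q s :=
        le_antisymm (monotone_runningMax hQ hrs.le) (hQr' ▸ apply_le_runningMax hQ le_rfl)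
      have hpT : p = T s := le_antisymm hp (by simpa [T, hMr] using hT r hrs)
      rw [hpT]
      refine (apply_lastTimeLE_le_max hP _).trans (max_le ?_ ?_)
      · linarith [hQ2 r s hrs.le]
      · linarith [hPa.apply_zero_le, (hQr s).1]
    · refine (apply_le_of_le_lastTimeLE hP hPa.approxInc hp).trans (max_le ?_ ?_)
      · linarith
      · linarith [hPa.apply_zero_le, (hQr r).1]
  · have hM1 : runningMax Q 1 = b :=
      le_antisymm (runningMax_le (fun r => (hQr r).2) 1) (hQ1 ▸ hQM)
    constructor <;> linarith [(hPa.mem_Icc p).2]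

end Proxy

theorem frechetDist_le_of_segment_proxy_general (δ : ℝ) (a b : ℝ)
    (Q : unitInterval → ℝ) (hQc : Continuous Q)
    (hQ0 : Q 0 = a) (hQ1 : Q 1 = b)
    (hQr : ∀ t : unitInterval, Q t ∈ Set.uIcc a b)
    (hQX : frechetDist Q (segCurve a b) ≤ δ)
    (P : unitInterval → ℝ) (hPc : Continuous P)
    (hPX : frechetDist P (segCurve a b) ≤ δ) :
    frechetDist P Q ≤ δ := by
  wlog hab : a ≤ b generalizing a b P Q
  · have hneg : Isometry (Neg.neg : ℝ → ℝ) := (IsometryEquiv.neg ℝ).isometry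
    have hX (R : I → ℝ) :
        frechetDist (Neg.neg ∘ R) (segCurve (-a) (-b)) = frechetDist R (segCurve a b) := by
      rw [segCurve_neg, frechetDist_comp_isometry hneg]
    rw [← frechetDist_comp_isometry hneg]
    exact this (-a) (-b) (Neg.neg ∘ Q) hQc.neg (by simp [hQ0]) (by simp [hQ1])
      (fun t => image_neg_uIcc (a := a) (b := b) ▸ mem_image_of_mem _ (hQr t))
      ((hX Q).trans_le hQX) (Neg.neg ∘ P) hPc.neg ((hX P).trans_le hPX) (by linarith)
  exact frechetDist_le_of_followsSegment hPc hQc (.of_frechetDist_le hab hPc hPX) hQ0 hQ1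
    (fun t => uIcc_of_le hab ▸ hQr t) (FollowsSegment.of_frechetDist_le hab hQc hQX).approxInc

/-- If `Q` starts at `a`, ends at `b`, stays in the interval spanned
by `a` and `b` and satisfies `d_F(Q, X) ≤ δ` for the segment `X` from `a` to `b`,
then every curve `P` with `d_F(P, X) ≤ δ` also satisfies `d_F(P, Q) ≤ δ`. -/
theorem frechetDist_le_of_segment_proxy (δ : ℝ) (hδ : 0 < δ) (a b : ℝ)
    (Q : unitInterval → ℝ) (hQc : Continuous Q)
    (hQ0 : Q 0 = a) (hQ1 : Q 1 = b)
    (hQr : ∀ t : unitInterval, Q t ∈ Set.uIcc a b)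
    (hQX : frechetDist Q (segCurve a b) ≤ δ)
    (P : unitInterval → ℝ) (hPc : Continuous P)
    (hPX : frechetDist P (segCurve a b) ≤ δ) :
    frechetDist P Q ≤ δ :=
  frechetDist_le_of_segment_proxy_general δ a b Q hQc hQ0 hQ1 hQr hQX P hPc hPX
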